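/- arXiv:1504.05449 — 4 statements merged into one kernel-verified Lean document; each statement's English description precedes it below -/
import Mathlib

section
/- Let γ > 0 and λ > γ/2 (i.e. E = -λ² < -(γ/2)²). Then ψ(x) = λ√2 · sech(λ|x| + arctanh(γ/(2λ))) is continuous on ℝ, smooth away from x = 0, satisfies -ψ''(x) - ψ(x)³ = -λ²ψ(x) for x ≠ 0, and satisfies the jump condition ψ'(0⁺) - ψ'(0⁻) = -γ ψ(0), i.e. it is the nonlinear bound state of -∂_x² - γδ(x) with cubic focusing nonlinearity. -/
open Set

noncomputable def sech (x : ℝ) : ℝ := 1 / Real.cosh x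

/-- The inverse hyperbolic tangent, `arctanh y = (1/2) log((1+y)/(1-y))`. -/
noncomputable def arctanh (y : ℝ) : ℝ := (1 / 2) * Real.log ((1 + y) / (1 - y))

lemma sinh_arctanh (y : ℝ) (h0 : -1 < y) (h1 : y < 1) :
    Real.sinh (arctanh y) = y * Real.cosh (arctanh y) := by
  have hr : 0 < (1 + y) / (1 - y) := by
    apply div_pos <;> linarith
  set a := arctanh y with ha
  have hE : Real.exp a ^ 2 = (1 + y) / (1 - y) := by
    rw [← Real.exp_nat_mul]
    have : (2 : ℝ) * a = Real.log ((1 + y) / (1 - y)) := by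
      rw [ha, arctanh]; ring
    push_cast
    rw [this, Real.exp_log hr]
  have hEpos : 0 < Real.exp a := Real.exp_pos a
  have h1y : (1 : ℝ) - y ≠ 0 := by linarith
  have hE2 : Real.exp a ^ 2 * (1 - y) = 1 + y := by rw [hE]; field_simp
  rw [Real.sinh_eq, Real.cosh_eq, Real.exp_neg]
  field_simp
  linear_combination hE2

lemma hd1 (c l a x : ℝ) :
    HasDerivAt (fun y => c / Real.cosh (l * y + a))
      (-(c * l * Real.sinh (l * x + a)) / Real.cosh (l * x + a) ^ 2) x := by
  have hin : HasDerivAt (fun y => l * y + a) l x := by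
    simpa using ((hasDerivAt_id x).const_mul l).add_const a
  have hcosh : HasDerivAt (fun y => Real.cosh (l * y + a)) (Real.sinh (l * x + a) * l) x :=
    by have h := (Real.hasDerivAt_cosh (l * x + a)).comp x hin; exact h
  have hne : Real.cosh (l * x + a) ≠ 0 := (Real.cosh_pos _).ne'
  have := (hasDerivAt_const x c).fun_div hcosh hne
  refine this.congr_deriv ?_
  field_simp
  ring

lemma hd2 (c l a x : ℝ) :
    HasDerivAt (fun y => -(c * l * Real.sinh (l * y + a)) / Real.cosh (l * y + a) ^ 2)
      (-(c * l ^ 2) * (Real.cosh (l * x + a) ^ 2 - 2 * Real.sinh (l * x + a) ^ 2)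
        / Real.cosh (l * x + a) ^ 3) x := by
  have hin : HasDerivAt (fun y => l * y + a) l x := by
    simpa using ((hasDerivAt_id x).const_mul l).add_const a
  have hsinh : HasDerivAt (fun y => Real.sinh (l * y + a)) (Real.cosh (l * x + a) * l) x :=
    by have h := (Real.hasDerivAt_sinh (l * x + a)).comp x hin; exact h
  have hnum : HasDerivAt (fun y => -(c * l * Real.sinh (l * y + a)))
      (-(c * l * (Real.cosh (l * x + a) * l))) x := by
    simpa [mul_assoc] using ((hsinh.const_mul (c * l)).fun_neg)
  have hcosh : HasDerivAt (fun y => Real.cosh (l * y + a)) (Real.sinh (l * x + a) * l) x :=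
    by have h := (Real.hasDerivAt_cosh (l * x + a)).comp x hin; exact h
  have hden : HasDerivAt (fun y => Real.cosh (l * y + a) ^ 2)
      (2 * Real.cosh (l * x + a) * (Real.sinh (l * x + a) * l)) x := by
    have := hcosh.fun_pow 2
    simpa [mul_comm, mul_assoc, mul_left_comm] using this
  have hne : Real.cosh (l * x + a) ^ 2 ≠ 0 := pow_ne_zero _ (Real.cosh_pos _).ne'
  have := hnum.fun_div hden hne
  refine this.congr_deriv ?_
  have hc := Real.cosh_sq (l * x + a)
  have hcne : Real.cosh (l * x + a) ≠ 0 := (Real.cosh_pos _).ne'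
  field_simp
  ring

/-- The nonlinear bound state pinned to an attractive Dirac delta at the origin:
`ψ(x) = λ√2 sech(λ|x| + artanh(γ/(2λ)))` is continuous, smooth away from `0`,
solves `-ψ'' - ψ³ = -λ²ψ` away from `0`, and satisfies the derivative jump
condition `ψ'(0⁺) - ψ'(0⁻) = -γ ψ(0)`. -/
theorem delta_well_nonlinear_bound_state (γ lam : ℝ) (hγ : 0 < γ) (hlam : γ / 2 < lam) :
    let ψ : ℝ → ℝ := fun x => lam * Real.sqrt 2 * sech (lam * |x| + arctanh (γ / (2 * lam)))
    Continuous ψ ∧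
    ContDiffOn ℝ (⊤ : ℕ∞) ψ {x : ℝ | x ≠ 0} ∧
    (∀ x : ℝ, x ≠ 0 → -(deriv (deriv ψ) x) - (ψ x) ^ 3 = -(lam ^ 2) * ψ x) ∧
    derivWithin ψ (Ici 0) 0 - derivWithin ψ (Iic 0) 0 = -γ * ψ 0 := by
  intro ψ
  have hlam0 : 0 < lam := lt_of_le_of_lt (by positivity) hlam
  set a : ℝ := arctanh (γ / (2 * lam)) with ha
  set c : ℝ := lam * Real.sqrt 2 with hc
  have hcne : ∀ t : ℝ, Real.cosh t ≠ 0 := fun t => (Real.cosh_pos t).ne'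
  have hψ : ∀ x, ψ x = c / Real.cosh (lam * |x| + a) := by
    intro x; simp only [ψ, sech, mul_one_div, ← hc, ← ha]
  -- continuity
  have hcont : Continuous ψ := by
    apply Continuous.mul continuous_const
    unfold sech
    exact continuous_const.div
      (Real.continuous_cosh.comp ((continuous_const.mul continuous_abs).add continuous_const))
      (fun x => hcne _)
  refine ⟨hcont, ?_, ?_, ?_⟩
  · -- smoothness away from 0
    intro x hx
    apply ContDiffAt.contDiffWithinAt
    rcases lt_or_gt_of_ne (Ne.symm hx) with hx' | hx'
    · -- x > 0
      have heq : ψ =ᶠ[nhds x] fun y => c / Real.cosh (lam * y + a) := by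
        filter_upwards [eventually_gt_nhds hx'] with y hy
        rw [hψ, abs_of_pos hy]
      apply ContDiffAt.congr_of_eventuallyEq _ heq
      have hb : ContDiff ℝ (⊤ : ℕ∞) (fun y : ℝ => Real.cosh (lam * y + a)) :=
        Real.contDiff_cosh.comp ((contDiff_const.mul contDiff_id).add contDiff_const)
      exact ContDiffAt.div contDiffAt_const hb.contDiffAt (hcne _)
    · -- x < 0
      have heq : ψ =ᶠ[nhds x] fun y => c / Real.cosh (-lam * y + a) := by
        filter_upwards [eventually_lt_nhds hx'] with y hy
        rw [hψ, abs_of_neg hy]; ring_nf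
      apply ContDiffAt.congr_of_eventuallyEq _ heq
      have hb : ContDiff ℝ (⊤ : ℕ∞) (fun y : ℝ => Real.cosh (-lam * y + a)) :=
        Real.contDiff_cosh.comp ((contDiff_const.mul contDiff_id).add contDiff_const)
      exact ContDiffAt.div contDiffAt_const hb.contDiffAt (hcne _)
  · -- the ODE away from 0
    intro x hx
    have hsqrt2 : Real.sqrt 2 ^ 2 = 2 := Real.sq_sqrt (by norm_num)
    have key : ∀ l : ℝ, l ^ 2 = lam ^ 2 → ∀ u : ℝ,
        -((-(c * l ^ 2) * (Real.cosh u ^ 2 - 2 * Real.sinh u ^ 2)) / Real.cosh u ^ 3)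
          - (c / Real.cosh u) ^ 3 = -(lam ^ 2) * (c / Real.cosh u) := by
      intro l hl u
      have h1 := Real.cosh_sq u
      have h2 := hcne u
      have hc3 : c ^ 3 = 2 * lam ^ 2 * c := by
        rw [hc]; linear_combination (lam ^ 3 * Real.sqrt 2) * hsqrt2
      rw [hl]
      field_simp
      linear_combination (2 * c * lam ^ 2) * h1 - hc3
    rcases lt_or_gt_of_ne (Ne.symm hx) with hx' | hx'
    · have heq : ψ =ᶠ[nhds x] fun y => c / Real.cosh (lam * y + a) := by
        filter_upwards [eventually_gt_nhds hx'] with y hy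
        rw [hψ, abs_of_pos hy]
      have hd : deriv (deriv ψ) x = deriv (deriv fun y => c / Real.cosh (lam * y + a)) x :=
        Filter.EventuallyEq.deriv_eq (Filter.EventuallyEq.deriv heq)
      have hder1 : (deriv fun y => c / Real.cosh (lam * y + a))
          = fun y => -(c * lam * Real.sinh (lam * y + a)) / Real.cosh (lam * y + a) ^ 2 := by
        funext y; exact (hd1 c lam a y).deriv
      rw [hd, hder1, (hd2 c lam a x).deriv, hψ, abs_of_pos hx']
      exact key lam rfl _
    · have heq : ψ =ᶠ[nhds x] fun y => c / Real.cosh (-lam * y + a) := by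
        filter_upwards [eventually_lt_nhds hx'] with y hy
        rw [hψ, abs_of_neg hy]; ring_nf
      have hd : deriv (deriv ψ) x = deriv (deriv fun y => c / Real.cosh (-lam * y + a)) x :=
        Filter.EventuallyEq.deriv_eq (Filter.EventuallyEq.deriv heq)
      have hder1 : (deriv fun y => c / Real.cosh (-lam * y + a))
          = fun y => -(c * -lam * Real.sinh (-lam * y + a)) / Real.cosh (-lam * y + a) ^ 2 := by
        funext y; exact (hd1 c (-lam) a y).deriv
      rw [hd, hder1, (hd2 c (-lam) a x).deriv, hψ, abs_of_neg hx']
      have : lam * -x + a = -lam * x + a := by ring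
      rw [this]
      exact key (-lam) (by ring) _
  · -- the jump condition
    have hy0 : -1 < γ / (2 * lam) := by
      have : 0 < γ / (2 * lam) := by positivity
      linarith
    have hy1 : γ / (2 * lam) < 1 := by
      rw [div_lt_one (by linarith)]; linarith
    have hsinh : Real.sinh a = γ / (2 * lam) * Real.cosh a := sinh_arctanh _ hy0 hy1
    have hplus : derivWithin ψ (Ici 0) 0
        = -(c * lam * Real.sinh a) / Real.cosh a ^ 2 := by
      have h : HasDerivWithinAt ψ (-(c * lam * Real.sinh (lam * 0 + a)) / Real.cosh (lam * 0 + a) ^ 2)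
          (Ici 0) 0 := by
        refine ((hd1 c lam a 0).hasDerivWithinAt).congr (fun y hy => ?_) ?_
        · rw [hψ, abs_of_nonneg (mem_Ici.mp hy)]
        · rw [hψ]; norm_num
      have := h.derivWithin (uniqueDiffOn_Ici 0 0 self_mem_Ici)
      simpa using this
    have hminus : derivWithin ψ (Iic 0) 0
        = (c * lam * Real.sinh a) / Real.cosh a ^ 2 := by
      have h : HasDerivWithinAt ψ
          (-(c * -lam * Real.sinh (-lam * 0 + a)) / Real.cosh (-lam * 0 + a) ^ 2) (Iic 0) 0 := by
        refine ((hd1 c (-lam) a 0).hasDerivWithinAt).congr (fun y hy => ?_) ?_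
        · rw [hψ, abs_of_nonpos (mem_Iic.mp hy)]; ring_nf
        · rw [hψ]; norm_num
      have := h.derivWithin (uniqueDiffOn_Iic 0 0 self_mem_Iic)
      rw [this]; norm_num
    rw [hplus, hminus, hψ, hsinh]
    have h0 : lam * |(0:ℝ)| + a = a := by norm_num
    rw [h0]
    have := hcne a
    field_simp
    ring
end

section
/- Define a(t) = a₀ e^{-iωt - ε²t/(2c)} and u(x,t) = (ε/c) a₀ e^{-(iω + ε²/(2c))(t - x/c)} · 1_{0 < x < ct}. Then the total energy E(t) = |a(t)|² + ∫_ℝ |u(x,t)|² dx is constant in time: E(t) = |a₀|² for all t ≥ 0. -/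
open Complex MeasureTheory

/-! With `k = ε² / c²`, the oscillator decays as `|a(t)|² = |a₀|² e^{-k c t}`, while the field
density on `(0, ct)` is `|a₀|² k e^{k (x - ct)}`, the `x`-derivative of `|a₀|² e^{k (x - ct)}`;
so the field carries exactly the lost energy `|a₀|² (1 - e^{-k c t})`. -/

lemma sq_norm_exp_neg_mul (ω r s : ℝ) :
    ‖exp (-(I * ω + r) * s)‖ ^ 2 = Real.exp (-(2 * r * s)) := by
  have hre : (-(I * ω + r) * s).re = -(r * s) := by simp
  rw [norm_exp, ← Real.exp_nat_mul, hre]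
  congr 1
  push_cast
  ring

lemma intervalIntegral_mul_exp_mul_sub (k L : ℝ) :
    ∫ x in (0 : ℝ)..L, k * Real.exp (k * (x - L)) = 1 - Real.exp (-(k * L)) := by
  have hderiv : ∀ x ∈ Set.uIcc 0 L,
      HasDerivAt (fun x => Real.exp (k * (x - L))) (k * Real.exp (k * (x - L))) x := by
    intro x _
    simpa [mul_comm] using ((hasDerivAt_id x).sub_const L |>.const_mul k).exp
  have hint : IntervalIntegrable (fun x => k * Real.exp (k * (x - L))) volume 0 L :=
    (by fun_prop : Continuous _).intervalIntegrable _ _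
  rw [intervalIntegral.integral_eq_sub_of_hasDerivAt hderiv hint]
  simp only [sub_self, mul_zero, Real.exp_zero, zero_sub, mul_neg]

/-- Energy conservation for the explicit solution of the oscillator--field model:
with `a(t) = a₀ e^{-iωt - ε²t/(2c)}` and
`u(x,t) = (ε/c) a₀ e^{-(iω + ε²/(2c))(t - x/c)} 1_{0 < x < ct}`, the total energy
`E(t) = |a(t)|² + ∫ |u(x,t)|² dx` equals `|a₀|²` for all `t ≥ 0`. -/
theorem oscillator_field_energy_conservation (ω c ε : ℝ) (hc : 0 < c) (a₀ : ℂ) :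
    let a : ℝ → ℂ := fun t => a₀ * Complex.exp ((-(I * ω) - (ε ^ 2 / (2 * c) : ℝ)) * t)
    let u : ℝ → ℝ → ℂ := fun x t =>
      Set.indicator (Set.Ioo (0 : ℝ) (c * t))
        (fun x => ((ε / c : ℝ) : ℂ) * a₀ *
          Complex.exp (-(I * ω + (ε ^ 2 / (2 * c) : ℝ)) * ((t - x / c : ℝ) : ℂ))) x
    ∀ t : ℝ, 0 ≤ t →
      ‖a t‖ ^ 2 + (∫ x : ℝ, ‖u x t‖ ^ 2) = ‖a₀‖ ^ 2 := by
  intro a u t ht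
  set k := ε ^ 2 / c ^ 2
  have ha : ‖a t‖ ^ 2 = ‖a₀‖ ^ 2 * Real.exp (-(k * (c * t))) := by
    simp only [a, ← neg_add', norm_mul, mul_pow, sq_norm_exp_neg_mul]
    congr 2
    simp only [k]
    field_simp
  have hu : (fun x => ‖u x t‖ ^ 2) = (Set.Ioo 0 (c * t)).indicator
      (fun x => ‖a₀‖ ^ 2 * (k * Real.exp (k * (x - c * t)))) := by
    funext x
    by_cases hx : x ∈ Set.Ioo 0 (c * t)
    · simp only [u, Set.indicator_of_mem hx, norm_mul, mul_pow, sq_norm_exp_neg_mul, norm_real,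
        Real.norm_eq_abs, sq_abs]
      have hexp : -(2 * (ε ^ 2 / (2 * c)) * (t - x / c)) = k * (x - c * t) := by
        simp only [k]
        field_simp
        ring
      rw [hexp, div_pow]
      ring
    · simp [u, hx]
  rw [ha, hu, integral_indicator measurableSet_Ioo, ← integral_Ioc_eq_integral_Ioo,
    ← intervalIntegral.integral_of_le (by positivity), intervalIntegral.integral_const_mul,
    intervalIntegral_mul_exp_mul_sub]
  ring
end

section
/- Consider the reduced ODE system dP₀/dt = Γ P₁² P₀, dP₁/dt = -2Γ P₁² P₀ with Γ > 0 and initial data P₀(0) > 0, P₁(0) > 0. Then: (a) 2P₀(t) + P₁(t) = 2P₀(0) + P₁(0) for all t ≥ 0; (b) P₀ is nondecreasing and P₁ is nonincreasing, and both remain positive; (c) P₁(t) → 0 as t → ∞; consequently (d) P₀(t) → P₀(0) + ½P₁(0) as t → ∞. -/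
/-!
Differentiating `2 P₀ + P₁` shows it is conserved. Each equation is linear in its own unknown,
`P₀' = (Γ P₁²) P₀` and `P₁' = (-2Γ P₁ P₀) P₁`, so the integrating factor keeps both positive, and
then the signs of the right-hand sides give the monotonicity. Since `P₀ ≥ P₀(0)`, the decreasing
function `P₁` satisfies `P₁' ≤ -2Γ P₀(0) P₁²`: if it stayed above some `δ > 0` it would decrease
at a fixed positive rate and become negative, so `P₁ → 0`, and conservation gives the limit of `P₀`.
-/

open Filter Set Topology

section HalfLine

variable {f f' : ℝ → ℝ} {a : ℝ}

theorem monotoneOn_Ici_of_hasDerivAt_nonneg (hf : ∀ t, a ≤ t → HasDerivAt f (f' t) t)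
    (hf' : ∀ t, a ≤ t → 0 ≤ f' t) : MonotoneOn f (Ici a) :=
  monotoneOn_of_hasDerivWithinAt_nonneg (convex_Ici a)
    (fun t ht => (hf t ht).continuousAt.continuousWithinAt)
    (fun t ht => (hf t (interior_subset ht)).hasDerivWithinAt)
    (fun t ht => hf' t (interior_subset ht))

theorem antitoneOn_Ici_of_hasDerivAt_nonpos (hf : ∀ t, a ≤ t → HasDerivAt f (f' t) t)
    (hf' : ∀ t, a ≤ t → f' t ≤ 0) : AntitoneOn f (Ici a) :=
  antitoneOn_of_hasDerivWithinAt_nonpos (convex_Ici a)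
    (fun t ht => (hf t ht).continuousAt.continuousWithinAt)
    (fun t ht => (hf t (interior_subset ht)).hasDerivWithinAt)
    (fun t ht => hf' t (interior_subset ht))

theorem eq_of_hasDerivAt_zero_of_le (hf : ∀ t, a ≤ t → HasDerivAt f 0 t) {t : ℝ}
    (ht : a ≤ t) : f t = f a :=
  le_antisymm
    (antitoneOn_Ici_of_hasDerivAt_nonpos hf (fun _ _ => le_rfl) self_mem_Ici ht ht)
    (monotoneOn_Ici_of_hasDerivAt_nonneg hf (fun _ _ => le_rfl) self_mem_Ici ht ht)

theorem pos_of_hasDerivAt_mul {c : ℝ → ℝ} (hc : ContinuousOn c (Ici a))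
    (hf : ∀ t, a ≤ t → HasDerivAt f (c t * f t) t) (ha : 0 < f a) {t : ℝ} (ht : a ≤ t) :
    0 < f t := by
  -- `exp (-∫ c) * f` is constant; `c (max s a)` extends `c` continuously to `ℝ`, so the FTC applies.
  set C : ℝ → ℝ := fun u => ∫ s in a..u, c (max s a)
  have hC : ∀ u, HasDerivAt C (c (max u a)) u := fun u =>
    ((hc.comp_continuous (continuous_id.max continuous_const) fun s => le_max_right s a
      ).integral_hasStrictDerivAt a u).hasDerivAt
  have hconst : ∀ u, a ≤ u → HasDerivAt (fun u => Real.exp (-C u) * f u) 0 u := by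
    intro u hu
    refine ((hC u).neg.exp.mul (hf u hu)).congr_deriv ?_
    rw [max_eq_left hu]
    ring
  have hprod : 0 < Real.exp (-C t) * f t := by
    rw [eq_of_hasDerivAt_zero_of_le hconst ht]
    positivity
  exact pos_of_mul_pos_right hprod (Real.exp_pos _).le

theorem exists_lt_of_hasDerivAt_le_neg_mul_sq {κ δ : ℝ} (hκ : 0 < κ) (hδ : 0 < δ)
    (hf : ∀ t, a ≤ t → HasDerivAt f (f' t) t) (hf' : ∀ t, a ≤ t → f' t ≤ -(κ * f t ^ 2)) :
    ∃ t, a ≤ t ∧ f t < δ := by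
  by_contra! hge
  set ε := κ * δ ^ 2
  have hε : 0 < ε := by positivity
  have hdecay : AntitoneOn (fun t => f t + ε * t) (Ici a) := by
    refine antitoneOn_Ici_of_hasDerivAt_nonpos
      (fun t ht => (hf t ht).add ((hasDerivAt_id t).const_mul ε)) fun t ht => ?_
    have hsq : δ ^ 2 ≤ f t ^ 2 := pow_le_pow_left₀ hδ.le (hge t ht) 2
    nlinarith [hf' t ht, mul_le_mul_of_nonneg_left hsq hκ.le]
  set T := a + f a / ε
  have hT : a ≤ T := le_add_of_nonneg_right (div_nonneg (hδ.le.trans (hge a le_rfl)) hε.le)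
  have hεT : ε * T = ε * a + f a := by simp only [T]; field_simp
  have := hdecay self_mem_Ici hT hT
  simp only at this
  linarith [hge T hT]

theorem tendsto_zero_of_hasDerivAt_le_neg_mul_sq {κ : ℝ} (hκ : 0 < κ)
    (hf : ∀ t, a ≤ t → HasDerivAt f (f' t) t) (hf' : ∀ t, a ≤ t → f' t ≤ -(κ * f t ^ 2))
    (hnonneg : ∀ t, a ≤ t → 0 ≤ f t) : Tendsto f atTop (𝓝 0) := by
  have hanti : AntitoneOn f (Ici a) := antitoneOn_Ici_of_hasDerivAt_nonpos hf fun t ht =>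
    (hf' t ht).trans (neg_nonpos.2 (by positivity))
  refine tendsto_order.2 ⟨fun b hb => ?_, fun δ hδ => ?_⟩
  · filter_upwards [eventually_ge_atTop a] with t ht
    exact hb.trans_le (hnonneg t ht)
  · obtain ⟨T, hT, hfT⟩ := exists_lt_of_hasDerivAt_le_neg_mul_sq hκ hδ hf hf'
    filter_upwards [eventually_ge_atTop T] with t ht
    exact (hanti hT (hT.trans ht) ht).trans_lt hfT

end HalfLine

/-- Ground state selection and energy equipartition in the reduced ODE system
`dP₀/dt = Γ P₁² P₀`, `dP₁/dt = -2Γ P₁² P₀` with `Γ > 0` and positive initial data: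
(a) `2P₀ + P₁` is conserved; (b) `P₀` is nondecreasing, `P₁` is nonincreasing,
and both stay positive; (c) `P₁(t) → 0`; (d) `P₀(t) → P₀(0) + P₁(0)/2`. -/
theorem reduced_system_ground_state_selection (Γ : ℝ) (hΓ : 0 < Γ)
    (P₀ P₁ : ℝ → ℝ) (h₀init : 0 < P₀ 0) (h₁init : 0 < P₁ 0)
    (hP₀ : ∀ t : ℝ, 0 ≤ t → HasDerivAt P₀ (Γ * (P₁ t) ^ 2 * P₀ t) t)
    (hP₁ : ∀ t : ℝ, 0 ≤ t → HasDerivAt P₁ (-(2 * Γ * (P₁ t) ^ 2 * P₀ t)) t) :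
    (∀ t : ℝ, 0 ≤ t → 2 * P₀ t + P₁ t = 2 * P₀ 0 + P₁ 0) ∧
    (MonotoneOn P₀ (Ici 0) ∧ AntitoneOn P₁ (Ici 0) ∧
      ∀ t : ℝ, 0 ≤ t → 0 < P₀ t ∧ 0 < P₁ t) ∧
    Tendsto P₁ atTop (nhds 0) ∧
    Tendsto P₀ atTop (nhds (P₀ 0 + P₁ 0 / 2)) := by
  have hc₀ : ContinuousOn P₀ (Ici 0) := fun t ht => (hP₀ t ht).continuousAt.continuousWithinAt
  have hc₁ : ContinuousOn P₁ (Ici 0) := fun t ht => (hP₁ t ht).continuousAt.continuousWithinAt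
  have hpos₀ : ∀ t, 0 ≤ t → 0 < P₀ t := fun t =>
    pos_of_hasDerivAt_mul (c := fun t => Γ * P₁ t ^ 2) (by fun_prop) hP₀ h₀init
  have hpos₁ : ∀ t, 0 ≤ t → 0 < P₁ t := fun t =>
    pos_of_hasDerivAt_mul (c := fun t => -(2 * Γ * P₁ t * P₀ t)) (by fun_prop)
      (fun u hu => (hP₁ u hu).congr_deriv (by ring)) h₁init
  have hcons : ∀ t, 0 ≤ t → 2 * P₀ t + P₁ t = 2 * P₀ 0 + P₁ 0 :=
    fun t => eq_of_hasDerivAt_zero_of_le fun u hu =>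
      (((hP₀ u hu).const_mul 2).add (hP₁ u hu)).congr_deriv (by ring)
  have hmono : MonotoneOn P₀ (Ici 0) := monotoneOn_Ici_of_hasDerivAt_nonneg hP₀ fun t ht => by
    have := hpos₀ t ht; positivity
  have hanti : AntitoneOn P₁ (Ici 0) := antitoneOn_Ici_of_hasDerivAt_nonpos hP₁ fun t ht => by
    have := hpos₀ t ht; simp only [neg_nonpos]; positivity
  have hlim₁ : Tendsto P₁ atTop (𝓝 0) :=
    tendsto_zero_of_hasDerivAt_le_neg_mul_sq (κ := 2 * Γ * P₀ 0) (by positivity) hP₁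
      (fun t ht => by
        have := mul_le_mul_of_nonneg_left (hmono self_mem_Ici ht ht)
          (by positivity : 0 ≤ 2 * Γ * P₁ t ^ 2)
        linarith)
      (fun t ht => (hpos₁ t ht).le)
  refine ⟨hcons, ⟨hmono, hanti, fun t ht => ⟨hpos₀ t ht, hpos₁ t ht⟩⟩, hlim₁, ?_⟩
  have hlim₀ := (tendsto_const_nhds (x := P₀ 0 + P₁ 0 / 2)).sub (hlim₁.div_const 2)
  rw [zero_div, sub_zero] at hlim₀
  refine hlim₀.congr' ?_
  filter_upwards [eventually_ge_atTop 0] with t ht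
  linarith [hcons t ht]
end

section
/- The three-mode toy model i∂_t α₀ - Ω₀α₀ = g⟨χ, conj(R)⟩ α₁², i∂_t α₁ - Ω₁α₁ = 2g⟨χ, R⟩ α₀ conj(α₁), i∂_t R = -ΔR + g χ(x) α₁² conj(α₀) conserves the total mass: d/dt (|α₀(t)|² + |α₁(t)|² + ∫ |R(x,t)|² dx) = 0. -/
open Complex MeasureTheory

/-- Laplacian of a function on `ℝ^d`, as the sum of second partial derivatives. -/
noncomputable def lap {d : ℕ} (f : (Fin d → ℝ) → ℂ) (x : Fin d → ℝ) : ℂ :=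
  ∑ i, iteratedDeriv 2 (fun s => f (Function.update x i s)) (x i)


open Function


section Infra
variable {d : ℕ}

/-- turn polynomial-decay hypotheses into a `(1+‖x‖)^{-m}` bound. -/
lemma tm_decay_bound {E F : Type*} [NormedAddCommGroup E] [NormedAddCommGroup F] {g : E → F} {m : ℕ} {C₀ Cm : ℝ}
    (h0 : ∀ x, ‖g x‖ ≤ C₀) (hm : ∀ x, ‖x‖ ^ m * ‖g x‖ ≤ Cm) :
    ∀ x, ‖g x‖ * (1 + ‖x‖) ^ m ≤ 2 ^ m * (C₀ + Cm) := by
  intro x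
  have hnn : (0:ℝ) ≤ ‖g x‖ := norm_nonneg _
  have h1 : (1 + ‖x‖) ^ m ≤ 2 ^ m * max 1 (‖x‖ ^ m) := by
    calc (1 + ‖x‖) ^ m ≤ (2 * max 1 ‖x‖) ^ m := by
          apply pow_le_pow_left₀ (by positivity)
          rcases le_total ‖x‖ 1 with h | h
          · calc 1 + ‖x‖ ≤ 2 := by linarith
              _ ≤ 2 * max 1 ‖x‖ := by nlinarith [le_max_left (1:ℝ) ‖x‖]
          · calc 1 + ‖x‖ ≤ 2 * ‖x‖ := by linarith
              _ ≤ 2 * max 1 ‖x‖ := by nlinarith [le_max_right (1:ℝ) ‖x‖]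
      _ = 2 ^ m * (max 1 ‖x‖) ^ m := mul_pow _ _ _
      _ = 2 ^ m * max 1 (‖x‖ ^ m) := by
          rcases le_total ‖x‖ 1 with h | h
          · rw [max_eq_left h, max_eq_left (pow_le_one₀ (norm_nonneg _) h), one_pow]
          · rw [max_eq_right h, max_eq_right (one_le_pow₀ h)]
  calc ‖g x‖ * (1 + ‖x‖) ^ m ≤ ‖g x‖ * (2 ^ m * max 1 (‖x‖ ^ m)) := by
        exact mul_le_mul_of_nonneg_left h1 hnn
    _ ≤ 2 ^ m * (C₀ + Cm) := by
        rcases max_cases (1:ℝ) (‖x‖ ^ m) with ⟨he, _⟩ | ⟨he, _⟩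
        · rw [he]
          have := h0 x
          have hCm : 0 ≤ Cm := le_trans (by positivity) (hm x)
          nlinarith [pow_pos (by norm_num : (0:ℝ) < 2) m]
        · rw [he]
          have := hm x
          have hC0 : 0 ≤ C₀ := le_trans hnn (h0 x)
          nlinarith [pow_pos (by norm_num : (0:ℝ) < 2) m, (hm x)]

/-- continuity + `(1+‖x‖)^{d+1}` bound implies integrability on `ℝ^d`. -/
lemma tm_integrable {F : Type*} [NormedAddCommGroup F] {g : (Fin d → ℝ) → F}
    (hc : Continuous g) {C : ℝ} (hC : ∀ x, ‖g x‖ * (1 + ‖x‖) ^ (d + 1) ≤ C) :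
    Integrable g := by
  have hint : Integrable (fun x : Fin d → ℝ => (1 + ‖x‖) ^ (-(d + 1 : ℝ))) :=
    integrable_one_add_norm (by simp [Module.finrank_fin_fun])
  refine ((hint.const_mul C).mono' hc.aestronglyMeasurable ?_)
  filter_upwards with x
  have hpos : (0:ℝ) < (1 + ‖x‖) ^ (d + 1) := by positivity
  have : (1 + ‖x‖) ^ (-(d + 1 : ℝ)) = ((1 + ‖x‖) ^ (d + 1))⁻¹ := by
    rw [← Real.rpow_natCast (1 + ‖x‖) (d + 1), ← Real.rpow_neg (by positivity)]
    norm_num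
  rw [this, ← div_eq_mul_inv]
  exact (le_div_iff₀ hpos).2 (hC x)

/-- continuity + `(1+|s|)^2` bound implies integrability on `ℝ`. -/
lemma tm_integrable_line {F : Type*} [NormedAddCommGroup F] {g : ℝ → F}
    (hc : Continuous g) {C : ℝ} (hC : ∀ s, ‖g s‖ * (1 + |s|) ^ 2 ≤ C) :
    Integrable g := by
  have hint : Integrable (fun s : ℝ => (1 + ‖s‖) ^ (-(2 : ℝ))) :=
    integrable_one_add_norm (by simp)
  refine ((hint.const_mul C).mono' hc.aestronglyMeasurable ?_)
  filter_upwards with s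
  have hpos : (0:ℝ) < (1 + |s|) ^ 2 := by positivity
  have : (1 + ‖s‖) ^ (-(2 : ℝ)) = ((1 + |s|) ^ 2)⁻¹ := by
    rw [Real.norm_eq_abs, ← Real.rpow_natCast (1 + |s|) 2, ← Real.rpow_neg (by positivity)]
    norm_num
  rw [this, ← div_eq_mul_inv]
  exact (le_div_iff₀ hpos).2 (hC s)

end Infra


noncomputable def tm_pd {d : ℕ} (i : Fin d) (f : (Fin d → ℝ) → ℂ) (x : Fin d → ℝ) : ℂ :=
  fderiv ℝ f x (Pi.single i 1)

section PD
variable {d : ℕ} {f : (Fin d → ℝ) → ℂ} {i : Fin d}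

lemma tm_pd_contDiff (hf : ContDiff ℝ (⊤ : ℕ∞) f) (i : Fin d) : ContDiff ℝ (⊤ : ℕ∞) (tm_pd i f) :=
  (hf.fderiv_right (by simp)).clm_apply contDiff_const

lemma tm_hasDerivAt_line (hf : ContDiff ℝ (⊤ : ℕ∞) f) (x : Fin d → ℝ) (i : Fin d) (s : ℝ) :
    HasDerivAt (fun s => f (update x i s)) (tm_pd i f (update x i s)) s :=
  ((hf.differentiable (by simp) (update x i s)).hasFDerivAt).comp_hasDerivAt s
    (hasDerivAt_update x i s)

lemma tm_norm_pd_le (x : Fin d → ℝ) : ‖tm_pd i f x‖ ≤ ‖iteratedFDeriv ℝ 1 f x‖ := by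
  have : tm_pd i f x = iteratedFDeriv ℝ 1 f x (fun _ => Pi.single i 1) := by
    rw [iteratedFDeriv_one_apply]; rfl
  rw [this]
  have hprod : (∏ _j : Fin 1, ‖(Pi.single i 1 : Fin d → ℝ)‖) = 1 := by
    simp [Pi.norm_single]
  have := (iteratedFDeriv ℝ 1 f x).le_opNorm (fun _ => (Pi.single i 1 : Fin d → ℝ))
  rwa [hprod, mul_one] at this

lemma tm_pd_pd (hf : ContDiff ℝ (⊤ : ℕ∞) f) (x : Fin d → ℝ) :
    tm_pd i (tm_pd i f) x
      = iteratedFDeriv ℝ 2 f x (fun _ => Pi.single i 1) := by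
  rw [iteratedFDeriv_two_apply]
  have hdf : DifferentiableAt ℝ (fderiv ℝ f) x :=
    (hf.fderiv_right (m := (⊤ : ℕ∞)) (by simp)).differentiable (by simp) x
  have : fderiv ℝ (tm_pd i f) x =
      (fderiv ℝ (fderiv ℝ f) x).flip (Pi.single i 1) := by
    have := fderiv_clm_apply (c := fderiv ℝ f) (u := fun _ => (Pi.single i 1 : Fin d → ℝ))
      hdf (differentiableAt_const _)
    simp only [fderiv_const_apply, Pi.zero_apply, ContinuousLinearMap.comp_zero, zero_add] at this
    exact this
  show fderiv ℝ (tm_pd i f) x (Pi.single i 1) = _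
  rw [this]; rfl

lemma tm_norm_pd_pd_le (hf : ContDiff ℝ (⊤ : ℕ∞) f) (x : Fin d → ℝ) :
    ‖tm_pd i (tm_pd i f) x‖ ≤ ‖iteratedFDeriv ℝ 2 f x‖ := by
  rw [tm_pd_pd hf]
  have hprod : (∏ _j : Fin 2, ‖(Pi.single i 1 : Fin d → ℝ)‖) = 1 := by
    simp [Pi.norm_single]
  have := (iteratedFDeriv ℝ 2 f x).le_opNorm (fun _ => (Pi.single i 1 : Fin d → ℝ))
  rwa [hprod, mul_one] at this

lemma tm_lap_eq (hf : ContDiff ℝ (⊤ : ℕ∞) f) (x : Fin d → ℝ) :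
    lap f x = ∑ i, tm_pd i (tm_pd i f) x := by
  unfold lap
  refine Finset.sum_congr rfl fun i _ => ?_
  have h2 : iteratedDeriv 2 (fun s => f (update x i s)) (x i)
      = deriv (deriv (fun s => f (update x i s))) (x i) := by
    rw [iteratedDeriv_succ, iteratedDeriv_one]
  rw [h2]
  have hd : deriv (fun s => f (update x i s)) = fun s => tm_pd i f (update x i s) := by
    funext s; exact (tm_hasDerivAt_line hf x i s).deriv
  rw [hd]
  have := (tm_hasDerivAt_line (tm_pd_contDiff hf i) x i (x i)).deriv
  rw [this, update_eq_self]

end PD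
section G
variable {n : ℕ}

lemma tm_insert_update (i : Fin (n+1)) (y : Fin n → ℝ) (s : ℝ) :
    Function.update (Fin.insertNth (α := fun _ => ℝ) i 0 y) i s = Fin.insertNth (α := fun _ => ℝ) i s y := by
  ext j
  rcases eq_or_ne j i with rfl | h
  · simp
  · rw [update_of_ne h]
    obtain ⟨k, rfl⟩ := Fin.exists_succAbove_eq h
    simp [Fin.insertNth_apply_succAbove]

lemma tm_fubini (i : Fin (n+1)) {g : (Fin (n+1) → ℝ) → ℂ} (hg : Integrable g) :
    ∫ x, g x = ∫ y : Fin n → ℝ, ∫ s : ℝ, g (Function.update (i.insertNth 0 y) i s) := by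
  have hmp := volume_preserving_piFinSuccAbove (fun _ : Fin (n+1) => ℝ) i
  set e := MeasurableEquiv.piFinSuccAbove (fun _ : Fin (n+1) => ℝ) i with he
  have h1 : ∫ x, g x = ∫ p : ℝ × (Fin n → ℝ), g (e.symm p) :=
    ((hmp.symm _).integral_comp' g).symm
  have hsymm : ∀ p : ℝ × (Fin n → ℝ), e.symm p = i.insertNth p.1 p.2 := fun p => rfl
  have hint : Integrable (fun p : ℝ × (Fin n → ℝ) => g (e.symm p))
      ((volume : Measure ℝ).prod (volume : Measure (Fin n → ℝ))) := by
    rw [← Measure.volume_eq_prod]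
    exact (hmp.symm _).integrable_comp_emb e.symm.measurableEmbedding |>.2 hg
  rw [h1]
  calc ∫ p : ℝ × (Fin n → ℝ), g (e.symm p)
      = ∫ p : ℝ × (Fin n → ℝ), g (e.symm p)
          ∂((volume : Measure ℝ).prod (volume : Measure (Fin n → ℝ))) := by
        rw [← Measure.volume_eq_prod]
    _ = ∫ y : Fin n → ℝ, ∫ s : ℝ, g (e.symm (s, y)) := integral_prod_symm _ hint
    _ = _ := by
        refine integral_congr_ae (Filter.Eventually.of_forall fun y => ?_)
        refine integral_congr_ae (Filter.Eventually.of_forall fun s => ?_)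
        show g (e.symm (s, y)) = g (update (i.insertNth 0 y) i s)
        rw [hsymm, tm_insert_update]
end G
section IBP
variable {d : ℕ} {f : (Fin d → ℝ) → ℂ}

lemma tm_line_bound {h : (Fin d → ℝ) → ℂ} {C : ℝ}
    (hC : ∀ x, ‖h x‖ * (1 + ‖x‖) ^ 2 ≤ C) (x : Fin d → ℝ) (i : Fin d) (s : ℝ) :
    ‖h (update x i s)‖ * (1 + |s|) ^ 2 ≤ C := by
  have hs : |s| ≤ ‖update x i s‖ := by
    have := norm_le_pi_norm (update x i s) i
    simpa using this
  calc ‖h (update x i s)‖ * (1 + |s|) ^ 2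
      ≤ ‖h (update x i s)‖ * (1 + ‖update x i s‖) ^ 2 := by gcongr
    _ ≤ C := hC _

lemma tm_sup_bound {h : (Fin d → ℝ) → ℂ} {C : ℝ}
    (hC : ∀ x, ‖h x‖ * (1 + ‖x‖) ^ 2 ≤ C) (x : Fin d → ℝ) : ‖h x‖ ≤ C := by
  have h1 : (1:ℝ) ≤ (1 + ‖x‖) ^ 2 := by nlinarith [norm_nonneg x]
  nlinarith [hC x, norm_nonneg (h x)]

/-- integrability of conjugate-products along a line. -/
lemma tm_prod_int {d : ℕ} (i : Fin d) (x : Fin d → ℝ)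
    {a b : (Fin d → ℝ) → ℂ} (ha : Continuous a) (hb : Continuous b) {C : ℝ}
    (hA : ∀ x, ‖a x‖ * (1 + ‖x‖) ^ 2 ≤ C) (hB : ∀ x, ‖b x‖ * (1 + ‖x‖) ^ 2 ≤ C) :
    Integrable ((fun s => (starRingEnd ℂ) (a (update x i s))) * (fun s => b (update x i s))) := by
  have hcu : Continuous (fun s => update x i s) := by
    have : (fun s => update x i s) = fun s j => update x i s j := rfl
    rw [this]
    apply continuous_pi
    intro j
    rcases eq_or_ne j i with rfl | h
    · simpa using continuous_id'
    · simp only [update_of_ne h]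
      exact continuous_const
  have hcont : Continuous (fun s => (starRingEnd ℂ) (a (update x i s)) * b (update x i s)) :=
    ((Complex.continuous_conj.comp (ha.comp hcu)).mul (hb.comp hcu))
  have hC0 : 0 ≤ C := le_trans (by positivity) (hA x)
  apply tm_integrable_line hcont (C := C * C)
  intro s
  have hn : ‖(starRingEnd ℂ) (a (update x i s)) * b (update x i s)‖
      = ‖a (update x i s)‖ * ‖b (update x i s)‖ := by
    rw [norm_mul, RCLike.norm_conj]
  show ‖(starRingEnd ℂ) (a (update x i s)) * b (update x i s)‖ * (1 + |s|) ^ 2 ≤ C * C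
  rw [hn, mul_assoc]
  exact mul_le_mul (tm_sup_bound hA _) (tm_line_bound hB x i s) (by positivity) hC0

/-- 1-D integration by parts along the `i`-th coordinate line. -/
lemma tm_ibp_line (hf : ContDiff ℝ (⊤ : ℕ∞) f) (i : Fin d) {C : ℝ}
    (h0 : ∀ x, ‖f x‖ * (1 + ‖x‖) ^ 2 ≤ C)
    (h1 : ∀ x, ‖tm_pd i f x‖ * (1 + ‖x‖) ^ 2 ≤ C)
    (h2 : ∀ x, ‖tm_pd i (tm_pd i f) x‖ * (1 + ‖x‖) ^ 2 ≤ C)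
    (x : Fin d → ℝ) :
    ∫ s, (starRingEnd ℂ) (f (update x i s)) * tm_pd i (tm_pd i f) (update x i s)
      = - ∫ s, (starRingEnd ℂ) (tm_pd i f (update x i s)) * tm_pd i f (update x i s) := by
  have hcf : Continuous f := hf.continuous
  have hc1 : Continuous (tm_pd i f) := (tm_pd_contDiff hf i).continuous
  have hc2 : Continuous (tm_pd i (tm_pd i f)) := (tm_pd_contDiff (tm_pd_contDiff hf i) i).continuous
  have hu : ∀ s : ℝ, HasDerivAt (fun s => (starRingEnd ℂ) (f (update x i s)))
      ((starRingEnd ℂ) (tm_pd i f (update x i s))) s := by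
    intro s
    have := (tm_hasDerivAt_line hf x i s).star
    simpa using this
  have hv : ∀ s : ℝ, HasDerivAt (fun s => tm_pd i f (update x i s))
      (tm_pd i (tm_pd i f) (update x i s)) s :=
    fun s => tm_hasDerivAt_line (tm_pd_contDiff hf i) x i s
  exact MeasureTheory.integral_mul_deriv_eq_deriv_mul_of_integrable
    (u := fun s => (starRingEnd ℂ) (f (update x i s)))
    (v := fun s => tm_pd i f (update x i s))
    (u' := fun s => (starRingEnd ℂ) (tm_pd i f (update x i s)))
    (v' := fun s => tm_pd i (tm_pd i f) (update x i s))
    (fun s _ => hu s) (fun s _ => hv s) (tm_prod_int i x hcf hc2 h0 h2) (tm_prod_int i x hc1 hc1 h1 h1)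
    (tm_prod_int i x hcf hc1 h0 h1)
end IBP
section Green
lemma tm_integral_im {α : Type*} [MeasurableSpace α] {μ : MeasureTheory.Measure α} {f : α → ℂ}
    (hf : Integrable f μ) : (∫ x, f x ∂μ).im = ∫ x, (f x).im ∂μ := by
  have := Complex.imCLM.integral_comp_comm hf
  simpa using this.symm

lemma tm_integral_re {α : Type*} [MeasurableSpace α] {μ : MeasureTheory.Measure α} {f : α → ℂ}
    (hf : Integrable f μ) : (∫ x, f x ∂μ).re = ∫ x, (f x).re ∂μ := by
  have := Complex.reCLM.integral_comp_comm hf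
  simpa using this.symm

/-- Key decay transfer: anything dominated by an iterated derivative norm decays. -/
lemma tm_key {d : ℕ} {f : (Fin d → ℝ) → ℂ}
    (hdecay : ∀ k n : ℕ, ∃ C, ∀ x, ‖x‖ ^ k * ‖iteratedFDeriv ℝ n f x‖ ≤ C)
    (m l : ℕ) (g : (Fin d → ℝ) → ℂ) (hg : ∀ x, ‖g x‖ ≤ ‖iteratedFDeriv ℝ l f x‖) :
    ∃ C, ∀ x, ‖g x‖ * (1 + ‖x‖) ^ m ≤ C := by
  obtain ⟨C0, h0⟩ := hdecay 0 l
  obtain ⟨Cm, hm⟩ := hdecay m l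
  refine ⟨2 ^ m * (C0 + Cm), tm_decay_bound (fun x => le_trans (hg x) ?_) (fun x => ?_)⟩
  · simpa using h0 x
  · exact le_trans (mul_le_mul_of_nonneg_left (hg x) (by positivity)) (hm x)

lemma tm_green {d : ℕ} {f : (Fin d → ℝ) → ℂ} (hf : ContDiff ℝ (⊤ : ℕ∞) f)
    (hdecay : ∀ k n : ℕ, ∃ C, ∀ x, ‖x‖ ^ k * ‖iteratedFDeriv ℝ n f x‖ ≤ C) :
    (∫ x, (starRingEnd ℂ) (f x) * lap f x).im = 0 := by
  rcases d with _ | n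
  · have : ∀ x : Fin 0 → ℝ, lap f x = 0 := fun x => by simp [lap]
    simp [this]
  -- bounds
  have hb0 : ∀ x, ‖f x‖ ≤ ‖iteratedFDeriv ℝ 0 f x‖ := fun x => by
    rw [norm_iteratedFDeriv_zero]
  obtain ⟨Cs, hCs⟩ := tm_key hdecay 0 0 f hb0
  have hCs' : ∀ x, ‖f x‖ ≤ Cs := fun x => by simpa using hCs x
  obtain ⟨Cf2, hCf2⟩ := tm_key hdecay 2 0 f hb0
  obtain ⟨Cfd, hCfd⟩ := tm_key hdecay (n + 2) 0 f hb0
  have hc : Continuous f := hf.continuous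
  have hint2 : ∀ i : Fin (n+1),
      Integrable (fun x => (starRingEnd ℂ) (f x) * tm_pd i (tm_pd i f) x) := by
    intro i
    obtain ⟨Cp, hCp⟩ := tm_key hdecay (n + 2) 2 (tm_pd i (tm_pd i f)) (tm_norm_pd_pd_le hf)
    apply tm_integrable ((Complex.continuous_conj.comp hc).mul
      (tm_pd_contDiff (tm_pd_contDiff hf i) i).continuous) (C := Cs * Cp)
    intro x
    show ‖(starRingEnd ℂ) (f x) * tm_pd i (tm_pd i f) x‖ * (1 + ‖x‖) ^ (n + 1 + 1) ≤ Cs * Cp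
    rw [norm_mul, RCLike.norm_conj, mul_assoc]
    exact mul_le_mul (hCs' x) (hCp x) (by positivity)
      (le_trans (norm_nonneg _) (hCs' x))
  have hint1 : ∀ i : Fin (n+1),
      Integrable (fun x => (starRingEnd ℂ) (tm_pd i f x) * tm_pd i f x) := by
    intro i
    obtain ⟨Cp, hCp⟩ := tm_key hdecay (n + 2) 1 (tm_pd i f) (fun x => tm_norm_pd_le x)
    obtain ⟨Cq, hCq⟩ := tm_key hdecay 0 1 (tm_pd i f) (fun x => tm_norm_pd_le x)
    have hCq' : ∀ x, ‖tm_pd i f x‖ ≤ Cq := fun x => by simpa using hCq x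
    apply tm_integrable ((Complex.continuous_conj.comp (tm_pd_contDiff hf i).continuous).mul
      (tm_pd_contDiff hf i).continuous) (C := Cq * Cp)
    intro x
    show ‖(starRingEnd ℂ) (tm_pd i f x) * tm_pd i f x‖ * (1 + ‖x‖) ^ (n + 1 + 1) ≤ Cq * Cp
    rw [norm_mul, RCLike.norm_conj, mul_assoc]
    exact mul_le_mul (hCq' x) (hCp x) (by positivity)
      (le_trans (norm_nonneg _) (hCq' x))
  have step1 : ∫ x, (starRingEnd ℂ) (f x) * lap f x
      = ∑ i : Fin (n+1), ∫ x, (starRingEnd ℂ) (f x) * tm_pd i (tm_pd i f) x := by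
    rw [← integral_finset_sum _ (fun i _ => hint2 i)]
    refine integral_congr_ae (Filter.Eventually.of_forall fun x => ?_)
    show (starRingEnd ℂ) (f x) * lap f x = ∑ i : Fin (n+1), (starRingEnd ℂ) (f x) * tm_pd i (tm_pd i f) x
    rw [tm_lap_eq hf x, Finset.mul_sum]
  have step2 : ∀ i : Fin (n+1), ∫ x, (starRingEnd ℂ) (f x) * tm_pd i (tm_pd i f) x
      = - ∫ x, (starRingEnd ℂ) (tm_pd i f x) * tm_pd i f x := by
    intro i
    obtain ⟨Cp1, hCp1⟩ := tm_key hdecay 2 1 (tm_pd i f) (fun x => tm_norm_pd_le x)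
    obtain ⟨Cp2, hCp2⟩ := tm_key hdecay 2 2 (tm_pd i (tm_pd i f)) (tm_norm_pd_pd_le hf)
    set C : ℝ := max Cf2 (max Cp1 Cp2) with hC
    have b0 : ∀ x, ‖f x‖ * (1 + ‖x‖) ^ 2 ≤ C :=
      fun x => le_trans (hCf2 x) (le_max_left _ _)
    have b1 : ∀ x, ‖tm_pd i f x‖ * (1 + ‖x‖) ^ 2 ≤ C :=
      fun x => le_trans (hCp1 x) (le_trans (le_max_left _ _) (le_max_right _ _))
    have b2 : ∀ x, ‖tm_pd i (tm_pd i f) x‖ * (1 + ‖x‖) ^ 2 ≤ C :=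
      fun x => le_trans (hCp2 x) (le_trans (le_max_right _ _) (le_max_right _ _))
    rw [tm_fubini i (hint2 i)]
    have hline : ∀ y : Fin n → ℝ,
        ∫ s, (starRingEnd ℂ) (f (update (i.insertNth 0 y) i s))
            * tm_pd i (tm_pd i f) (update (i.insertNth 0 y) i s)
          = - ∫ s, (starRingEnd ℂ) (tm_pd i f (update (i.insertNth 0 y) i s))
            * tm_pd i f (update (i.insertNth 0 y) i s) :=
      fun y => tm_ibp_line hf i b0 b1 b2 (i.insertNth 0 y)
    calc (∫ y : Fin n → ℝ, ∫ s, (starRingEnd ℂ) (f (update (i.insertNth 0 y) i s))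
            * tm_pd i (tm_pd i f) (update (i.insertNth 0 y) i s))
        = ∫ y : Fin n → ℝ, -(∫ s, (starRingEnd ℂ) (tm_pd i f (update (i.insertNth 0 y) i s))
            * tm_pd i f (update (i.insertNth 0 y) i s)) :=
          integral_congr_ae (Filter.Eventually.of_forall hline)
      _ = -(∫ y : Fin n → ℝ, ∫ s, (starRingEnd ℂ) (tm_pd i f (update (i.insertNth 0 y) i s))
            * tm_pd i f (update (i.insertNth 0 y) i s)) := integral_neg _
      _ = - ∫ x, (starRingEnd ℂ) (tm_pd i f x) * tm_pd i f x := by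
          rw [← tm_fubini i (hint1 i)]
  have step3 : ∀ i : Fin (n+1),
      (∫ x, (starRingEnd ℂ) (tm_pd i f x) * tm_pd i f x).im = 0 := by
    intro i
    rw [tm_integral_im (hint1 i)]
    have hz : ∀ z : ℂ, ((starRingEnd ℂ) z * z).im = 0 := fun z => by
      simp [Complex.mul_im]; ring
    simp [hz]
  rw [step1]
  rw [Finset.sum_congr rfl (fun i _ => step2 i)]
  rw [Complex.im_sum]
  refine Finset.sum_eq_zero fun i _ => ?_
  rw [Complex.neg_im, step3 i, neg_zero]
end Green
section Main

lemma tm_rpow_inv (x : ℝ) (hx : 0 ≤ x) (m : ℕ) :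
    (1 + x) ^ (-(m:ℝ)) = ((1 + x) ^ m)⁻¹ := by
  rw [← Real.rpow_natCast (1 + x) m, ← Real.rpow_neg (by linarith)]

lemma tm_hasDerivAt_normSq {γ : ℝ → ℂ} {γ' : ℂ} {t : ℝ} (h : HasDerivAt γ γ' t) :
    HasDerivAt (fun t => ‖γ t‖ ^ 2) (2 * ((starRingEnd ℂ) (γ t) * γ').re) t := by
  have hre : HasDerivAt (fun t => (γ t).re) γ'.re t :=
    (Complex.reCLM.hasFDerivAt.comp_hasDerivAt t h)
  have him : HasDerivAt (fun t => (γ t).im) γ'.im t :=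
    (Complex.imCLM.hasFDerivAt.comp_hasDerivAt t h)
  have hmul : HasDerivAt (fun t => (γ t).re * (γ t).re + (γ t).im * (γ t).im)
      (γ'.re * (γ t).re + (γ t).re * γ'.re + (γ'.im * (γ t).im + (γ t).im * γ'.im)) t :=
    (hre.mul hre).add (him.mul him)
  have heq : (fun t => ‖γ t‖ ^ 2)
      = fun t => (γ t).re * (γ t).re + (γ t).im * (γ t).im := by
    funext u
    rw [← Complex.normSq_apply, Complex.normSq_eq_norm_sq]
  rw [heq]
  convert hmul using 1
  simp [Complex.mul_re]
  ring

lemma tm_alg (a b A : ℂ) (g Ω₀ Ω₁ : ℝ) :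
    2 * ((starRingEnd ℂ) a * (-Complex.I * ((Ω₀:ℂ) * a + (g:ℂ) * A * b ^ 2))).re
    + 2 * ((starRingEnd ℂ) b * (-Complex.I * ((Ω₁:ℂ) * b
        + 2 * (g:ℂ) * ((starRingEnd ℂ) A) * a * (starRingEnd ℂ) b))).re
    + 2 * ((-Complex.I * (g:ℂ) * b ^ 2 * (starRingEnd ℂ) a) * A).re = 0 := by
  simp only [Complex.mul_re, Complex.mul_im, Complex.add_re, Complex.add_im,
    Complex.neg_re, Complex.neg_im, Complex.I_re, Complex.I_im, Complex.ofReal_re,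
    Complex.ofReal_im, Complex.conj_re, Complex.conj_im, pow_two, Complex.re_ofNat, Complex.im_ofNat,
    Complex.mul_re, Complex.mul_im]
  ring

end Main
/-- additional algebra lemma for the decoupled case. -/
lemma tm_alg0 (a b A B : ℂ) (g Ω₀ Ω₁ : ℝ)
    (hc : (g:ℂ) * b ^ 2 * (starRingEnd ℂ) a = 0) :
    2 * ((starRingEnd ℂ) a * (-Complex.I * ((Ω₀:ℂ) * a + (g:ℂ) * A * b ^ 2))).re
    + 2 * ((starRingEnd ℂ) b * (-Complex.I * ((Ω₁:ℂ) * b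
        + 2 * (g:ℂ) * B * a * (starRingEnd ℂ) b))).re = 0 := by
  rcases mul_eq_zero.1 hc with h | h
  · rcases mul_eq_zero.1 h with h' | h'
    · rw [h']
      simp only [Complex.mul_re, Complex.mul_im, Complex.add_re, Complex.add_im,
        Complex.neg_re, Complex.neg_im, Complex.I_re, Complex.I_im, Complex.ofReal_re,
        Complex.ofReal_im, Complex.conj_re, Complex.conj_im, pow_two, Complex.re_ofNat,
        Complex.im_ofNat, Complex.zero_re, Complex.zero_im]
      ring
    · have hb : b = 0 := by
        have := pow_eq_zero_iff (n := 2) (by norm_num) |>.1 h'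
        exact this
      rw [hb]
      simp only [Complex.mul_re, Complex.mul_im, Complex.add_re, Complex.add_im,
        Complex.neg_re, Complex.neg_im, Complex.I_re, Complex.I_im, Complex.ofReal_re,
        Complex.ofReal_im, Complex.conj_re, Complex.conj_im, pow_two, Complex.re_ofNat,
        Complex.im_ofNat, Complex.zero_re, Complex.zero_im, map_zero]
      ring
  · have ha : a = 0 := by simpa using h
    rw [ha]
    simp only [Complex.mul_re, Complex.mul_im, Complex.add_re, Complex.add_im,
      Complex.neg_re, Complex.neg_im, Complex.I_re, Complex.I_im, Complex.ofReal_re,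
      Complex.ofReal_im, Complex.conj_re, Complex.conj_im, pow_two, Complex.re_ofNat,
      Complex.im_ofNat, Complex.zero_re, Complex.zero_im, map_zero]
    ring

/-- Conservation of total mass `|α₀|² + |α₁|² + ∫|R|²` for the three-mode toy model
`i∂ₜα₀ - Ω₀α₀ = g⟨χ, R̄⟩α₁²`, `i∂ₜα₁ - Ω₁α₁ = 2g⟨χ, R⟩α₀ᾱ₁`,
`i∂ₜR = -ΔR + gχα₁²ᾱ₀`, where `⟨f,h⟩ = ∫ f̄ h`. -/
theorem toy_model_mass_conservation {d : ℕ} (g Ω₀ Ω₁ : ℝ) (χ : (Fin d → ℝ) → ℝ)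
    (hχ : ∀ k n : ℕ, ∃ C, ∀ x : Fin d → ℝ, ‖x‖ ^ k * ‖iteratedFDeriv ℝ n χ x‖ ≤ C)
    (α₀ α₁ : ℝ → ℂ) (R : (Fin d → ℝ) → ℝ → ℂ)
    (hα₀diff : Differentiable ℝ α₀) (hα₁diff : Differentiable ℝ α₁)
    (hα₀deriv : Continuous (deriv α₀)) (hα₁deriv : Continuous (deriv α₁))
    (hRsmooth : ContDiff ℝ (⊤ : ℕ∞) fun p : (Fin d → ℝ) × ℝ => R p.1 p.2)
    (hRdecay : ∀ (k n : ℕ) (T : ℝ), ∃ C, ∀ (x : Fin d → ℝ) (t : ℝ), |t| ≤ T →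
      ‖x‖ ^ k * ‖iteratedFDeriv ℝ n (fun y => R y t) x‖ ≤ C)
    (h0 : ∀ t : ℝ, I * deriv α₀ t - (Ω₀ : ℂ) * α₀ t =
      (g : ℂ) * (∫ x, ((χ x : ℂ)) * (starRingEnd ℂ) (R x t)) * (α₁ t) ^ 2)
    (h1 : ∀ t : ℝ, I * deriv α₁ t - (Ω₁ : ℂ) * α₁ t =
      2 * (g : ℂ) * (∫ x, ((χ x : ℂ)) * R x t) * α₀ t * (starRingEnd ℂ) (α₁ t))
    (hR : ∀ (x : Fin d → ℝ) (t : ℝ), I * deriv (fun s => R x s) t =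
      -(lap (fun y => R y t) x) + (g : ℂ) * (χ x : ℂ) * (α₁ t) ^ 2 * (starRingEnd ℂ) (α₀ t)) :
    ∀ t : ℝ,
      ‖α₀ t‖ ^ 2 + ‖α₁ t‖ ^ 2 + (∫ x, ‖R x t‖ ^ 2) =
      ‖α₀ 0‖ ^ 2 + ‖α₁ 0‖ ^ 2 + (∫ x, ‖R x 0‖ ^ 2) := by
  classical
  -- basic facts about R
  have hRdiff : Differentiable ℝ (fun p : (Fin d → ℝ) × ℝ => R p.1 p.2) :=
    hRsmooth.differentiable (by simp)
  set RT : (Fin d → ℝ) → ℝ → ℂ :=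
    fun x t => fderiv ℝ (fun p : (Fin d → ℝ) × ℝ => R p.1 p.2) (x, t) ((0 : Fin d → ℝ), (1:ℝ))
    with hRTdef
  have hRT : ∀ (x : Fin d → ℝ) (t : ℝ), HasDerivAt (fun s => R x s) (RT x t) t := by
    intro x t
    have h1 : HasDerivAt (fun s : ℝ => ((x, s) : (Fin d → ℝ) × ℝ))
        ((0 : Fin d → ℝ), (1:ℝ)) t := (hasDerivAt_const t x).prodMk (hasDerivAt_id t)
    exact (hRdiff (x, t)).hasFDerivAt.comp_hasDerivAt t h1
  have hft : ∀ t : ℝ, ContDiff ℝ (⊤ : ℕ∞) (fun y => R y t) := fun t =>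
    hRsmooth.comp (contDiff_id.prodMk contDiff_const)
  have hRcont : ∀ t, Continuous (fun y => R y t) := fun t => (hft t).continuous
  have hftdecay : ∀ t : ℝ, ∀ k n : ℕ, ∃ C, ∀ x,
      ‖x‖ ^ k * ‖iteratedFDeriv ℝ n (fun y => R y t) x‖ ≤ C := by
    intro t k n
    obtain ⟨C, hC⟩ := hRdecay k n |t|
    exact ⟨C, fun x => hC x t le_rfl⟩
  have hRTeq : ∀ x t, RT x t = -Complex.I * (-(lap (fun y => R y t) x)
      + (g:ℂ) * (χ x:ℂ) * (α₁ t)^2 * (starRingEnd ℂ) (α₀ t)) := by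
    intro x t
    have h := hR x t
    rw [(hRT x t).deriv] at h
    calc RT x t = -Complex.I * (Complex.I * RT x t) := by
          rw [← mul_assoc, neg_mul, Complex.I_mul_I, neg_neg, one_mul]
      _ = _ := by rw [h]
  have hRTcont : ∀ t, Continuous (fun x => RT x t) := by
    intro t
    have h1 : Continuous (fderiv ℝ (fun p : (Fin d → ℝ) × ℝ => R p.1 p.2)) :=
      (hRsmooth.fderiv_right (m := (⊤ : ℕ∞)) (by simp)).continuous
    have h2 : Continuous (fun x : Fin d → ℝ => ((x, t) : (Fin d → ℝ) × ℝ)) :=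
      continuous_id.prodMk continuous_const
    exact (ContinuousLinearMap.apply ℝ ℂ
      (((0 : Fin d → ℝ), (1:ℝ)) : (Fin d → ℝ) × ℝ)).continuous.comp (h1.comp h2)
  have hlapcont : ∀ t, Continuous (fun x => lap (fun y => R y t) x) := by
    intro t
    have heq : (fun x => lap (fun y => R y t) x)
        = fun x => ∑ i, tm_pd i (tm_pd i (fun y => R y t)) x := funext (tm_lap_eq (hft t))
    rw [heq]
    exact continuous_finset_sum _ fun i _ =>
      (tm_pd_contDiff (tm_pd_contDiff (hft t) i) i).continuous
  -- sup bound for χ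
  obtain ⟨Cχs, hCχs'⟩ := hχ 0 0
  have hCχs : ∀ x, |χ x| ≤ Cχs := by
    intro x
    have := hCχs' x
    rwa [pow_zero, one_mul, norm_iteratedFDeriv_zero, Real.norm_eq_abs] at this
  -- the conserved functional
  set Φ : ℝ → ℝ := fun t => ‖α₀ t‖ ^ 2 + ‖α₁ t‖ ^ 2 + ∫ x, ‖R x t‖ ^ 2 with hΦdef
  have key : ∀ t₀ : ℝ, HasDerivAt Φ 0 t₀ := by
    intro t₀
    set T : ℝ := |t₀| + 1 with hTdef
    -- constants
    obtain ⟨Ca0, hCa0⟩ := (isCompact_Icc (a := -T) (b := T)).exists_bound_of_continuousOn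
      (hα₀diff.continuous.continuousOn)
    obtain ⟨Ca1, hCa1⟩ := (isCompact_Icc (a := -T) (b := T)).exists_bound_of_continuousOn
      (hα₁diff.continuous.continuousOn)
    set Ca : ℝ := max Ca0 Ca1 with hCadef
    have hCa0' : ∀ t, |t| ≤ T → ‖α₀ t‖ ≤ Ca := fun t ht =>
      le_trans (hCa0 t (abs_le.1 ht)) (le_max_left _ _)
    have hCa1' : ∀ t, |t| ≤ T → ‖α₁ t‖ ≤ Ca := fun t ht =>
      le_trans (hCa1 t (abs_le.1 ht)) (le_max_right _ _)
    obtain ⟨C2s, hC2s'⟩ := hRdecay 0 2 T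
    have hC2s : ∀ x t, |t| ≤ T → ‖iteratedFDeriv ℝ 2 (fun y => R y t) x‖ ≤ C2s := by
      intro x t ht
      have := hC2s' x t ht
      rwa [pow_zero, one_mul] at this
    obtain ⟨CR0, hCR0'⟩ := hRdecay 0 0 T
    have hCRs : ∀ x t, |t| ≤ T → ‖R x t‖ ≤ CR0 := by
      intro x t ht
      have := hCR0' x t ht
      rwa [pow_zero, one_mul, norm_iteratedFDeriv_zero] at this
    obtain ⟨CRd', hCRd'⟩ := hRdecay (d+1) 0 T
    set CRd : ℝ := 2 ^ (d+1) * (CR0 + CRd') with hCRddef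
    have hCRd : ∀ t, |t| ≤ T → ∀ x, ‖R x t‖ * (1 + ‖x‖) ^ (d+1) ≤ CRd := by
      intro t ht
      apply tm_decay_bound (fun x => hCRs x t ht)
      intro x
      have := hCRd' x t ht
      rwa [norm_iteratedFDeriv_zero] at this
    have ht₀T : |t₀| ≤ T := by rw [hTdef]; linarith
    have hCRdnn : 0 ≤ CRd := le_trans (by positivity) (hCRd t₀ ht₀T 0)
    have hCχnn : 0 ≤ Cχs := le_trans (abs_nonneg _) (hCχs 0)
    -- bound on the Laplacian
    have hlapb : ∀ x t, |t| ≤ T → ‖lap (fun y => R y t) x‖ ≤ (d:ℝ) * C2s := by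
      intro x t ht
      rw [tm_lap_eq (hft t) x]
      calc ‖∑ i, tm_pd i (tm_pd i (fun y => R y t)) x‖
          ≤ ∑ i : Fin d, ‖tm_pd i (tm_pd i (fun y => R y t)) x‖ := norm_sum_le _ _
        _ ≤ ∑ _i : Fin d, C2s := Finset.sum_le_sum fun i _ =>
            le_trans (tm_norm_pd_pd_le (hft t) x) (hC2s x t ht)
        _ = (d:ℝ) * C2s := by simp [mul_comm]
    -- bound on RT
    set K : ℝ := (d:ℝ) * C2s + |g| * Cχs * (Ca * (Ca * Ca)) with hKdef
    have hRTb : ∀ x t, |t| ≤ T → ‖RT x t‖ ≤ K := by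
      intro x t ht
      rw [hRTeq x t]
      rw [norm_mul, norm_neg, Complex.norm_I, one_mul]
      calc ‖-(lap (fun y => R y t) x) + (g:ℂ) * (χ x:ℂ) * (α₁ t)^2 * (starRingEnd ℂ) (α₀ t)‖
          ≤ ‖-(lap (fun y => R y t) x)‖
            + ‖(g:ℂ) * (χ x:ℂ) * (α₁ t)^2 * (starRingEnd ℂ) (α₀ t)‖ := norm_add_le _ _
        _ ≤ (d:ℝ) * C2s + |g| * Cχs * (Ca * (Ca * Ca)) := by
            apply add_le_add
            · rw [norm_neg]; exact hlapb x t ht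
            · rw [norm_mul, norm_mul, norm_mul, norm_pow, RCLike.norm_conj,
                Complex.norm_real, Complex.norm_real, Real.norm_eq_abs, Real.norm_eq_abs]
              have hb := hCa1' t ht
              have ha := hCa0' t ht
              have hχx := hCχs x
              have h1 : ‖α₁ t‖ ^ 2 ≤ Ca * Ca := by nlinarith [norm_nonneg (α₁ t)]
              have hCann : 0 ≤ Ca := le_trans (norm_nonneg _) ha
              have hCχnn2 : 0 ≤ Cχs := le_trans (abs_nonneg _) (hCχs 0)
              calc |g| * |χ x| * ‖α₁ t‖ ^ 2 * ‖α₀ t‖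
                  ≤ |g| * Cχs * (Ca * Ca) * Ca := by
                    apply mul_le_mul _ ha (norm_nonneg _)
                      (mul_nonneg (mul_nonneg (abs_nonneg g) hCχnn2)
                        (mul_nonneg hCann hCann))
                    apply mul_le_mul _ h1 (by positivity)
                      (mul_nonneg (abs_nonneg g) hCχnn2)
                    exact mul_le_mul le_rfl hχx (abs_nonneg _) (abs_nonneg _)
                _ = |g| * Cχs * (Ca * (Ca * Ca)) := by ring
    have hKnn : 0 ≤ K := le_trans (norm_nonneg _) (hRTb 0 t₀ ht₀T)
    -- derivative of the integral term
    have hmain := hasDerivAt_integral_of_dominated_loc_of_deriv_le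
      (F := fun t (x : Fin d → ℝ) => ‖R x t‖ ^ 2)
      (F' := fun t (x : Fin d → ℝ) => 2 * ((starRingEnd ℂ) (R x t) * RT x t).re)
      (x₀ := t₀) (s := Metric.ball t₀ 1) (Metric.ball_mem_nhds t₀ one_pos)
      (bound := fun x : Fin d → ℝ => (2 * K * CRd) * (1 + ‖x‖) ^ (-((d+1 : ℕ) : ℝ)))
      (Filter.Eventually.of_forall fun t => ((hRcont t).norm.pow 2).aestronglyMeasurable)
      (tm_integrable ((hRcont t₀).norm.pow 2) (C := CR0 * CRd) (by
        intro x
        show |‖R x t₀‖ ^ 2| * (1 + ‖x‖) ^ (d + 1) ≤ CR0 * CRd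
        rw [_root_.abs_of_nonneg (by positivity), pow_two, mul_assoc]
        exact mul_le_mul (hCRs x t₀ ht₀T) (hCRd t₀ ht₀T x) (by positivity)
          (le_trans (norm_nonneg _) (hCRs x t₀ ht₀T))))
      ((continuous_const.mul (Complex.continuous_re.comp
        ((Complex.continuous_conj.comp (hRcont t₀)).mul (hRTcont t₀)))).aestronglyMeasurable)
      (Filter.Eventually.of_forall (fun x => by
        intro t ht
        have htT : |t| ≤ T := by
          rw [hTdef]
          have := Metric.mem_ball.1 ht
          rw [Real.dist_eq] at this
          calc |t| = |t - t₀ + t₀| := by ring_nf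
            _ ≤ |t - t₀| + |t₀| := abs_add_le _ _
            _ ≤ |t₀| + 1 := by linarith
        have h1 : ‖2 * ((starRingEnd ℂ) (R x t) * RT x t).re‖
            ≤ 2 * (‖R x t‖ * ‖RT x t‖) := by
          rw [Real.norm_eq_abs, abs_mul, _root_.abs_two]
          have := Complex.abs_re_le_norm ((starRingEnd ℂ) (R x t) * RT x t)
          rw [norm_mul, RCLike.norm_conj] at this
          nlinarith [abs_nonneg (((starRingEnd ℂ) (R x t) * RT x t).re)]
        have h2 : ‖R x t‖ * ‖RT x t‖ ≤ (CRd * ((1 + ‖x‖) ^ (d+1))⁻¹) * K := by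
          apply mul_le_mul _ (hRTb x t htT) (norm_nonneg _) (by positivity)
          rw [← div_eq_mul_inv]
          exact (le_div_iff₀ (by positivity)).2 (hCRd t htT x)
        calc ‖2 * ((starRingEnd ℂ) (R x t) * RT x t).re‖
            ≤ 2 * (‖R x t‖ * ‖RT x t‖) := h1
          _ ≤ 2 * ((CRd * ((1 + ‖x‖) ^ (d+1))⁻¹) * K) := by linarith
          _ = (2 * K * CRd) * (1 + ‖x‖) ^ (-((d+1 : ℕ) : ℝ)) := by
              rw [tm_rpow_inv ‖x‖ (norm_nonneg x) (d+1)]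
              ring))
      (((integrable_one_add_norm (μ := (volume : Measure (Fin d → ℝ))) (r := ((d+1:ℕ):ℝ)) (by
        rw [Module.finrank_fin_fun]; exact_mod_cast Nat.lt_succ_self d)).const_mul (2 * K * CRd)))
      (Filter.Eventually.of_forall (fun x => fun t _ => tm_hasDerivAt_normSq (hRT x t)))
    have hFderiv : HasDerivAt (fun t => ∫ x, ‖R x t‖ ^ 2)
        (∫ x, 2 * ((starRingEnd ℂ) (R x t₀) * RT x t₀).re) t₀ := hmain.2
    -- rewrite the derivative of the integral term
    have hint_cRT : Integrable (fun x => (starRingEnd ℂ) (R x t₀) * RT x t₀) := by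
      apply tm_integrable (((Complex.continuous_conj.comp (hRcont t₀)).mul (hRTcont t₀)))
        (C := CRd * K)
      intro x
      show ‖(starRingEnd ℂ) (R x t₀) * RT x t₀‖ * (1 + ‖x‖) ^ (d + 1) ≤ CRd * K
      rw [norm_mul, RCLike.norm_conj]
      calc ‖R x t₀‖ * ‖RT x t₀‖ * (1 + ‖x‖) ^ (d+1)
          = (‖R x t₀‖ * (1 + ‖x‖) ^ (d+1)) * ‖RT x t₀‖ := by ring
        _ ≤ CRd * K := mul_le_mul (hCRd t₀ ht₀T x) (hRTb x t₀ ht₀T) (norm_nonneg _) hCRdnn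
    have hderiv_val : (∫ x, 2 * ((starRingEnd ℂ) (R x t₀) * RT x t₀).re)
        = 2 * (∫ x, (starRingEnd ℂ) (R x t₀) * RT x t₀).re := by
      rw [integral_const_mul, tm_integral_re hint_cRT]
    -- derivative of the whole functional
    have hΦensure : HasDerivAt Φ
        (2 * ((starRingEnd ℂ) (α₀ t₀) * deriv α₀ t₀).re
          + 2 * ((starRingEnd ℂ) (α₁ t₀) * deriv α₁ t₀).re
          + (∫ x, 2 * ((starRingEnd ℂ) (R x t₀) * RT x t₀).re)) t₀ := by
      exact ((tm_hasDerivAt_normSq (hα₀diff t₀).hasDerivAt).add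
        (tm_hasDerivAt_normSq (hα₁diff t₀).hasDerivAt)).add hFderiv
    -- specialize the mode equations
    have h0' := h0 t₀
    have h1' := h1 t₀
    set a : ℂ := α₀ t₀ with hadef
    set b : ℂ := α₁ t₀ with hbdef
    set A : ℂ := ∫ x, ((χ x : ℂ)) * (starRingEnd ℂ) (R x t₀) with hAdef
    set B : ℂ := ∫ x, ((χ x : ℂ)) * R x t₀ with hBdef
    have hda : deriv α₀ t₀ = -Complex.I * ((Ω₀:ℂ) * a + (g:ℂ) * A * b ^ 2) := by
      have hI : Complex.I * deriv α₀ t₀ = (Ω₀:ℂ) * a + (g:ℂ) * A * b ^ 2 := by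
        linear_combination h0'
      calc deriv α₀ t₀ = -Complex.I * (Complex.I * deriv α₀ t₀) := by
            rw [← mul_assoc, neg_mul, Complex.I_mul_I, neg_neg, one_mul]
        _ = _ := by rw [hI]
    have hdb : deriv α₁ t₀ = -Complex.I * ((Ω₁:ℂ) * b
        + 2 * (g:ℂ) * B * a * (starRingEnd ℂ) b) := by
      have hI : Complex.I * deriv α₁ t₀ = (Ω₁:ℂ) * b
          + 2 * (g:ℂ) * B * a * (starRingEnd ℂ) b := by
        linear_combination h1'
      calc deriv α₁ t₀ = -Complex.I * (Complex.I * deriv α₁ t₀) := by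
            rw [← mul_assoc, neg_mul, Complex.I_mul_I, neg_neg, one_mul]
        _ = _ := by rw [hI]
    set c : ℂ := (g:ℂ) * b ^ 2 * (starRingEnd ℂ) a with hcdef
    have hgc : ∀ x : Fin d → ℝ, (g:ℂ) * ((χ x : ℝ):ℂ) * b ^ 2 * (starRingEnd ℂ) a
        = ((χ x : ℝ):ℂ) * c := by
      intro x; rw [hcdef]; ring
    have hRTeq' : ∀ x, RT x t₀
        = -Complex.I * (-(lap (fun y => R y t₀) x) + ((χ x : ℝ):ℂ) * c) := by
      intro x
      rw [hRTeq x t₀, ← hadef, ← hbdef, hgc x]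
    have him0 := tm_green (hft t₀) (hftdecay t₀)
    by_cases hc0 : c = 0
    · -- decoupled case
      have hptw : ∀ x : Fin d → ℝ, (starRingEnd ℂ) (R x t₀) * RT x t₀
          = Complex.I * ((starRingEnd ℂ) (R x t₀) * lap (fun y => R y t₀) x) := by
        intro x; rw [hRTeq' x, hc0]; ring
      have hre : (∫ x, (starRingEnd ℂ) (R x t₀) * RT x t₀).re = 0 := by
        rw [integral_congr_ae (Filter.Eventually.of_forall hptw), integral_const_mul,
          Complex.mul_re]
        simp [him0]
      have hD : (2 * ((starRingEnd ℂ) a * deriv α₀ t₀).re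
          + 2 * ((starRingEnd ℂ) b * deriv α₁ t₀).re
          + (∫ x, 2 * ((starRingEnd ℂ) (R x t₀) * RT x t₀).re)) = 0 := by
        rw [hderiv_val, hre, mul_zero, add_zero, hda, hdb]
        exact tm_alg0 a b A B g Ω₀ Ω₁ hc0
      exact hD ▸ hΦensure
    · -- coupled case: χ is continuous
      have hχC : Continuous fun x : Fin d → ℝ => ((χ x : ℝ) : ℂ) := by
        have hval : ∀ x : Fin d → ℝ, ((χ x : ℝ) : ℂ)
            = (Complex.I * RT x t₀ + lap (fun y => R y t₀) x) / c := by
          intro x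
          rw [eq_div_iff hc0]
          have h4 : Complex.I * RT x t₀
              = -(lap (fun y => R y t₀) x) + ((χ x : ℝ):ℂ) * c := by
            rw [hRTeq' x, ← mul_assoc, mul_neg, Complex.I_mul_I, neg_neg, one_mul]
          rw [h4]; ring
        rw [show (fun x : Fin d → ℝ => ((χ x : ℝ):ℂ))
            = fun x => (Complex.I * RT x t₀ + lap (fun y => R y t₀) x) / c from funext hval]
        exact ((continuous_const.mul (hRTcont t₀)).add (hlapcont t₀)).div_const c
      obtain ⟨Cχd', hCχd''⟩ := hχ (d+1) 0
      have hCχd'2 : ∀ x, ‖x‖ ^ (d+1) * ‖χ x‖ ≤ Cχd' := fun x => by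
        have := hCχd'' x; rwa [norm_iteratedFDeriv_zero] at this
      have hCχd : ∀ x, ‖χ x‖ * (1 + ‖x‖) ^ (d+1) ≤ 2 ^ (d+1) * (Cχs + Cχd') :=
        tm_decay_bound (fun x => by rw [Real.norm_eq_abs]; exact hCχs x) hCχd'2
      set Cχd : ℝ := 2 ^ (d+1) * (Cχs + Cχd') with hCχddef
      have hCχdnn : 0 ≤ Cχd := le_trans (by positivity) (hCχd 0)
      have hint_cR : Integrable (fun x => ((χ x:ℝ):ℂ) * (starRingEnd ℂ) (R x t₀)) := by
        apply tm_integrable (hχC.mul (Complex.continuous_conj.comp (hRcont t₀)))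
          (C := Cχd * CR0)
        intro x
        show ‖((χ x:ℝ):ℂ) * (starRingEnd ℂ) (R x t₀)‖ * (1 + ‖x‖) ^ (d + 1) ≤ Cχd * CR0
        rw [norm_mul, RCLike.norm_conj, Complex.norm_real]
        calc ‖χ x‖ * ‖R x t₀‖ * (1 + ‖x‖) ^ (d+1)
            = (‖χ x‖ * (1 + ‖x‖) ^ (d+1)) * ‖R x t₀‖ := by ring
          _ ≤ Cχd * CR0 := mul_le_mul (hCχd x) (hCRs x t₀ ht₀T) (norm_nonneg _) hCχdnn
      have hint_cl : Integrable
          (fun x => (starRingEnd ℂ) (R x t₀) * lap (fun y => R y t₀) x) := by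
        apply tm_integrable ((Complex.continuous_conj.comp (hRcont t₀)).mul (hlapcont t₀))
          (C := CRd * ((d:ℝ) * C2s))
        intro x
        show ‖(starRingEnd ℂ) (R x t₀) * lap (fun y => R y t₀) x‖ * (1 + ‖x‖) ^ (d + 1)
          ≤ CRd * ((d:ℝ) * C2s)
        rw [norm_mul, RCLike.norm_conj]
        calc ‖R x t₀‖ * ‖lap (fun y => R y t₀) x‖ * (1 + ‖x‖) ^ (d+1)
            = (‖R x t₀‖ * (1 + ‖x‖) ^ (d+1)) * ‖lap (fun y => R y t₀) x‖ := by ring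
          _ ≤ CRd * ((d:ℝ) * C2s) :=
            mul_le_mul (hCRd t₀ ht₀T x) (hlapb x t₀ ht₀T) (norm_nonneg _) hCRdnn
      have hBA : B = (starRingEnd ℂ) A := by
        rw [hAdef, ← integral_conj, hBdef]
        refine integral_congr_ae (Filter.Eventually.of_forall fun x => ?_)
        simp [map_mul, Complex.conj_ofReal]
      have hsplit : (∫ x, (starRingEnd ℂ) (R x t₀) * RT x t₀)
          = Complex.I * (∫ x, (starRingEnd ℂ) (R x t₀) * lap (fun y => R y t₀) x)
            + (-Complex.I * c) * A := by
        have hptw : ∀ x : Fin d → ℝ, (starRingEnd ℂ) (R x t₀) * RT x t₀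
            = Complex.I * ((starRingEnd ℂ) (R x t₀) * lap (fun y => R y t₀) x)
              + (-Complex.I * c) * (((χ x:ℝ):ℂ) * (starRingEnd ℂ) (R x t₀)) := by
          intro x; rw [hRTeq' x]; ring
        rw [integral_congr_ae (Filter.Eventually.of_forall hptw),
          integral_add (hint_cl.const_mul _) (hint_cR.const_mul _),
          integral_const_mul, integral_const_mul, ← hAdef]
      have hre : (∫ x, (starRingEnd ℂ) (R x t₀) * RT x t₀).re
          = ((-Complex.I * c) * A).re := by
        rw [hsplit, Complex.add_re]
        have hz : (Complex.I * (∫ x, (starRingEnd ℂ) (R x t₀)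
            * lap (fun y => R y t₀) x)).re = 0 := by
          rw [Complex.mul_re]; simp [him0]
        rw [hz, zero_add]
      have hD : (2 * ((starRingEnd ℂ) a * deriv α₀ t₀).re
          + 2 * ((starRingEnd ℂ) b * deriv α₁ t₀).re
          + (∫ x, 2 * ((starRingEnd ℂ) (R x t₀) * RT x t₀).re)) = 0 := by
        rw [hBA] at hdb
        rw [hderiv_val, hre, hda, hdb]
        have hcc : -Complex.I * c
            = -Complex.I * (g:ℂ) * b ^ 2 * (starRingEnd ℂ) a := by
          rw [hcdef]; ring
        rw [hcc]
        exact tm_alg a b A g Ω₀ Ω₁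
      exact hD ▸ hΦensure
  have hconst : ∀ t, Φ t = Φ 0 := fun t =>
    is_const_of_deriv_eq_zero (fun s => (key s).differentiableAt) (fun s => (key s).deriv) t 0
  intro t
  have := hconst t
  simp only [hΦdef] at *
  exact this
end
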